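/- For every smooth function f : ℝᵐ \ {0} → ℝ and every x ≠ 0 one has Σ_{i=1}^m D_i(D_i f)(x) = ‖x‖^{2−a} Δf(x) + ( b² + b(l−2) + b c (l−1) + b m ) ‖x‖^{−a} f(x) + (c² + 2c) ‖x‖^{−a} ( E(E f)(x) − E f(x) ) + ( 2bc + c² l + c l + c m + 2b ) ‖x‖^{−a} E f(x) + ( l + c l − c ) ‖x‖^{−a} E f(x), where l = 1 − a/2. (Explicit formula for the scalar part of D² in the case of trivial multiplicity function k = 0.) -/

import Mathlib

open Real

/-- `i`-th partial derivative of a scalar function on Euclidean space. -/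
noncomputable def pd {m : ℕ} (i : Fin m) (f : EuclideanSpace ℝ (Fin m) → ℝ)
    (x : EuclideanSpace ℝ (Fin m)) : ℝ :=
  fderiv ℝ f x (EuclideanSpace.single i 1)

/-- Euler operator `E f (x) = ∑ j, x j * ∂_j f (x)`. -/
noncomputable def euler {m : ℕ} (f : EuclideanSpace ℝ (Fin m) → ℝ)
    (x : EuclideanSpace ℝ (Fin m)) : ℝ :=
  ∑ j, x j * pd j f x

/-- Components `D_i` of the deformed Dirac operator (trivial multiplicity `k = 0`). -/
noncomputable def Dop {m : ℕ} (a b c : ℝ) (i : Fin m)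
    (f : EuclideanSpace ℝ (Fin m) → ℝ) (x : EuclideanSpace ℝ (Fin m)) : ℝ :=
  ‖x‖ ^ (1 - a / 2) * pd i f x + b * ‖x‖ ^ (-(a / 2) - 1) * x i * f x
    + c * ‖x‖ ^ (-(a / 2) - 1) * x i * euler f x

section Aux

variable {m : ℕ} {x : EuclideanSpace ℝ (Fin m)}
  {g h : EuclideanSpace ℝ (Fin m) → ℝ} {j : Fin m}

lemma pd_add' (hg : DifferentiableAt ℝ g x) (hh : DifferentiableAt ℝ h x) :
    pd j (fun y => g y + h y) x = pd j g x + pd j h x := by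
  unfold pd
  rw [fderiv_fun_add hg hh, ContinuousLinearMap.add_apply]

lemma pd_mul' (hg : DifferentiableAt ℝ g x) (hh : DifferentiableAt ℝ h x) :
    pd j (fun y => g y * h y) x = pd j g x * h x + g x * pd j h x := by
  unfold pd
  rw [fderiv_fun_mul hg hh]
  simp only [ContinuousLinearMap.add_apply, ContinuousLinearMap.smul_apply, smul_eq_mul]
  ring

lemma pd_sum' {ι : Type*} {s : Finset ι} {g : ι → EuclideanSpace ℝ (Fin m) → ℝ}
    (hg : ∀ k ∈ s, DifferentiableAt ℝ (g k) x) :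
    pd j (fun y => ∑ k ∈ s, g k y) x = ∑ k ∈ s, pd j (g k) x := by
  unfold pd
  rw [fderiv_fun_sum hg]
  simp

lemma pd_coord' (i : Fin m) : pd j (fun y : EuclideanSpace ℝ (Fin m) => y i) x
    = if j = i then 1 else 0 := by
  have hL : HasFDerivAt (fun y : EuclideanSpace ℝ (Fin m) => y i)
      (EuclideanSpace.proj (𝕜 := ℝ) i) x := (EuclideanSpace.proj (𝕜 := ℝ) i).hasFDerivAt
  rw [pd, hL.fderiv]
  simp [EuclideanSpace.single_apply]
  rcases eq_or_ne i j with h | h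
  · simp [h]
  · simp [h, Ne.symm h]

lemma diffAt_coord (i : Fin m) :
    DifferentiableAt ℝ (fun y : EuclideanSpace ℝ (Fin m) => y i) x :=
  (EuclideanSpace.proj (𝕜 := ℝ) i).hasFDerivAt.differentiableAt

lemma hasFDerivAt_norm_rpow' (p : ℝ) (hx : x ≠ 0) :
    HasFDerivAt (fun y : EuclideanSpace ℝ (Fin m) => ‖y‖ ^ p)
      ((p * ‖x‖ ^ (p - 2)) • (innerSL ℝ x)) x := by
  have hx2 : (‖x‖ ^ 2 : ℝ) ≠ 0 := pow_ne_zero 2 (norm_ne_zero_iff.mpr hx)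
  have h2 : HasFDerivAt (fun y : EuclideanSpace ℝ (Fin m) => ‖y‖ ^ 2)
      ((2 : ℕ) • (innerSL ℝ x)) x := (hasStrictFDerivAt_norm_sq x).hasFDerivAt
  have h3 : HasDerivAt (fun t : ℝ => t ^ (p / 2))
      ((p / 2) * (‖x‖ ^ 2 : ℝ) ^ (p / 2 - 1)) (‖x‖ ^ 2) :=
    Real.hasDerivAt_rpow_const (Or.inl hx2)
  have h4 := h3.comp_hasFDerivAt x h2
  have hfun : ((fun t : ℝ => t ^ (p / 2)) ∘ fun y : EuclideanSpace ℝ (Fin m) => (‖y‖ ^ 2 : ℝ))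
      = fun y : EuclideanSpace ℝ (Fin m) => ‖y‖ ^ p := by
    funext y
    simp only [Function.comp_apply]
    rw [← Real.rpow_natCast ‖y‖ 2, ← Real.rpow_mul (norm_nonneg y)]
    congr 1
    push_cast
    ring
  rw [hfun] at h4
  have hpow : ((‖x‖ : ℝ) ^ 2) ^ (p / 2 - 1) = ‖x‖ ^ (p - 2) := by
    rw [← Real.rpow_natCast ‖x‖ 2, ← Real.rpow_mul (norm_nonneg x)]
    congr 1
    push_cast
    ring
  have h5 : (p / 2 * ((‖x‖ : ℝ) ^ 2) ^ (p / 2 - 1)) • ((2 : ℕ) • (innerSL ℝ) x)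
      = (p * ‖x‖ ^ (p - 2)) • (innerSL ℝ) x := by
    ext y
    simp [hpow, smul_smul]
    ring
  rw [h5] at h4
  exact h4

lemma pd_norm_rpow (p : ℝ) (hx : x ≠ 0) :
    pd j (fun y : EuclideanSpace ℝ (Fin m) => ‖y‖ ^ p) x = p * ‖x‖ ^ (p - 2) * x j := by
  rw [pd, (hasFDerivAt_norm_rpow' p hx).fderiv]
  simp only [ContinuousLinearMap.smul_apply, innerSL_apply_apply, smul_eq_mul]
  rw [real_inner_comm, EuclideanSpace.inner_single_left]
  simp [mul_assoc]

lemma diffAt_norm_rpow (p : ℝ) (hx : x ≠ 0) :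
    DifferentiableAt ℝ (fun y : EuclideanSpace ℝ (Fin m) => ‖y‖ ^ p) x :=
  (hasFDerivAt_norm_rpow' p hx).differentiableAt

end Aux

set_option maxHeartbeats 1000000 in
theorem stmt_4 (m : ℕ) (hm : 1 ≤ m) (a b c : ℝ) (hc : c ≠ -1)
    (f : EuclideanSpace ℝ (Fin m) → ℝ)
    (hf : ContDiffOn ℝ (⊤ : ℕ∞) f {(0 : EuclideanSpace ℝ (Fin m))}ᶜ)
    (x : EuclideanSpace ℝ (Fin m)) (hx : x ≠ 0) :
    ∑ i, Dop a b c i (Dop a b c i f) x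
      = ‖x‖ ^ (2 - a) * (∑ j, pd j (pd j f) x)
        + (b ^ 2 + b * ((1 - a / 2) - 2) + b * c * ((1 - a / 2) - 1) + b * m)
            * ‖x‖ ^ (-a) * f x
        + (c ^ 2 + 2 * c) * ‖x‖ ^ (-a) * (euler (euler f) x - euler f x)
        + (2 * b * c + c ^ 2 * (1 - a / 2) + c * (1 - a / 2) + c * m + 2 * b)
            * ‖x‖ ^ (-a) * euler f x
        + ((1 - a / 2) + c * (1 - a / 2) - c) * ‖x‖ ^ (-a) * euler f x := by
  have hr0 : (0 : ℝ) < ‖x‖ := norm_pos_iff.mpr hx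
  have hmem : {(0 : EuclideanSpace ℝ (Fin m))}ᶜ ∈ nhds x :=
    isOpen_compl_singleton.mem_nhds (by simpa using hx)
  have cf : ContDiffAt ℝ 2 f x := (hf.contDiffAt hmem).of_le (WithTop.coe_le_coe.mpr le_top)
  have dF : DifferentiableAt ℝ f x := cf.differentiableAt (by norm_num)
  have dP : ∀ i : Fin m, DifferentiableAt ℝ (pd i f) x := by
    intro i
    have h1 : ContDiffAt ℝ 1 (fderiv ℝ f) x := cf.fderiv_right (by norm_num)
    exact (h1.clm_apply contDiffAt_const).differentiableAt one_ne_zero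
  have dE : DifferentiableAt ℝ (euler f) x := by
    have h1 : DifferentiableAt ℝ (fun y : EuclideanSpace ℝ (Fin m) => ∑ j, y j * pd j f y) x :=
      DifferentiableAt.fun_sum (fun k _ => (diffAt_coord k).fun_mul (dP k))
    exact h1
  have pdDop : ∀ i j : Fin m, pd j (Dop a b c i f) x
      = (1 - a / 2) * ‖x‖ ^ ((1 - a / 2) - 2) * x j * pd i f x
        + ‖x‖ ^ (1 - a / 2) * pd j (pd i f) x
        + ((b * ((-(a / 2) - 1) * ‖x‖ ^ ((-(a / 2) - 1) - 2) * x j)) * x i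
            + (b * ‖x‖ ^ (-(a / 2) - 1)) * (if j = i then 1 else 0)) * f x
        + b * ‖x‖ ^ (-(a / 2) - 1) * x i * pd j f x
        + ((c * ((-(a / 2) - 1) * ‖x‖ ^ ((-(a / 2) - 1) - 2) * x j)) * x i
            + (c * ‖x‖ ^ (-(a / 2) - 1)) * (if j = i then 1 else 0)) * euler f x
        + c * ‖x‖ ^ (-(a / 2) - 1) * x i * pd j (euler f) x := by
    intro i j
    have hDef : Dop a b c i f = fun y =>
        (‖y‖ ^ (1 - a / 2) * pd i f y + b * ‖y‖ ^ (-(a / 2) - 1) * y i * f y)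
          + c * ‖y‖ ^ (-(a / 2) - 1) * y i * euler f y := rfl
    have dN1 : DifferentiableAt ℝ
        (fun y : EuclideanSpace ℝ (Fin m) => ‖y‖ ^ (1 - a / 2)) x := diffAt_norm_rpow _ hx
    have dN2 : DifferentiableAt ℝ
        (fun y : EuclideanSpace ℝ (Fin m) => ‖y‖ ^ (-(a / 2) - 1)) x := diffAt_norm_rpow _ hx
    have d1 : DifferentiableAt ℝ
        (fun y : EuclideanSpace ℝ (Fin m) => ‖y‖ ^ (1 - a / 2) * pd i f y) x := dN1.mul (dP i)
    have dbN : DifferentiableAt ℝ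
        (fun y : EuclideanSpace ℝ (Fin m) => b * ‖y‖ ^ (-(a / 2) - 1)) x :=
      (differentiableAt_const b).mul dN2
    have dcN : DifferentiableAt ℝ
        (fun y : EuclideanSpace ℝ (Fin m) => c * ‖y‖ ^ (-(a / 2) - 1)) x :=
      (differentiableAt_const c).mul dN2
    have d2 : DifferentiableAt ℝ
        (fun y : EuclideanSpace ℝ (Fin m) => b * ‖y‖ ^ (-(a / 2) - 1) * y i * f y) x :=
      ((dbN.mul (diffAt_coord i)).mul dF)
    have d3 : DifferentiableAt ℝ
        (fun y : EuclideanSpace ℝ (Fin m) => c * ‖y‖ ^ (-(a / 2) - 1) * y i * euler f y) x :=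
      ((dcN.mul (diffAt_coord i)).mul dE)
    rw [hDef, pd_add' (d1.fun_add d2) d3, pd_add' d1 d2,
      pd_mul' dN1 (dP i),
      pd_mul' (dbN.fun_mul (diffAt_coord i)) dF,
      pd_mul' dbN (diffAt_coord i),
      pd_mul' (dcN.fun_mul (diffAt_coord i)) dE,
      pd_mul' dcN (diffAt_coord i),
      pd_mul' (differentiableAt_const b) dN2,
      pd_mul' (differentiableAt_const c) dN2,
      pd_norm_rpow (1 - a / 2) hx, pd_norm_rpow (-(a / 2) - 1) hx, pd_coord' i]
    have hconst : ∀ t : ℝ, pd j (fun _ : EuclideanSpace ℝ (Fin m) => t) x = 0 := by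
      intro t
      unfold pd
      rw [fderiv_const_apply]
      simp
    rw [hconst b, hconst c]
    ring
  have hN : (∑ j, x j * x j) = ‖x‖ * ‖x‖ := by
    rw [EuclideanSpace.norm_eq, Real.mul_self_sqrt (by positivity)]
    refine Finset.sum_congr rfl fun i _ => ?_
    rw [Real.norm_eq_abs, sq_abs]
    ring
  have hpdEuler : ∀ j : Fin m, pd j (euler f) x
      = pd j f x + ∑ k, x k * pd j (pd k f) x := by
    intro j
    have hDefE : euler f
        = fun y : EuclideanSpace ℝ (Fin m) => ∑ k, y k * pd k f y := rfl
    rw [hDefE, pd_sum' (fun k _ => (diffAt_coord k).fun_mul (dP k)),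
      Finset.sum_congr rfl (fun k _ => by rw [pd_mul' (diffAt_coord k) (dP k), pd_coord' k]),
      Finset.sum_add_distrib]
    congr 1
    simp [ite_mul]
  have hHH : euler (euler f) x
      = euler f x + ∑ j, ∑ k, x j * (x k * pd j (pd k f) x) := by
    have h0 : euler (euler f) x = ∑ j, x j * pd j (euler f) x := rfl
    rw [h0,
      Finset.sum_congr rfl (fun j _ => by rw [hpdEuler j, mul_add, Finset.mul_sum]),
      Finset.sum_add_distrib]
    rfl
  have hSR : (∑ i, x i * euler (pd i f) x) = euler (euler f) x - euler f x := by
    calc (∑ i, x i * euler (pd i f) x)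
        = ∑ i, ∑ j, x i * (x j * pd j (pd i f) x) := by
          refine Finset.sum_congr rfl fun i _ => ?_
          rw [show euler (pd i f) x = ∑ j, x j * pd j (pd i f) x from rfl, Finset.mul_sum]
      _ = ∑ j, ∑ i, x i * (x j * pd j (pd i f) x) := Finset.sum_comm
      _ = ∑ j, ∑ k, x j * (x k * pd j (pd k f) x) :=
          Finset.sum_congr rfl fun j _ => Finset.sum_congr rfl fun k _ => by ring
      _ = euler (euler f) x - euler f x := by rw [hHH]; ring
  have hEulerDop : ∀ i : Fin m, euler (Dop a b c i f) x
      = ((1 - a / 2) * ‖x‖ ^ ((1 - a / 2) - 2) * pd i f x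
          + b * ((-(a / 2) - 1) * ‖x‖ ^ ((-(a / 2) - 1) - 2)) * x i * f x
          + c * ((-(a / 2) - 1) * ‖x‖ ^ ((-(a / 2) - 1) - 2)) * x i * euler f x)
          * (∑ j, x j * x j)
        + ‖x‖ ^ (1 - a / 2) * euler (pd i f) x
        + (b * ‖x‖ ^ (-(a / 2) - 1) * f x + c * ‖x‖ ^ (-(a / 2) - 1) * euler f x) * x i
        + (b * ‖x‖ ^ (-(a / 2) - 1) * x i) * euler f x
        + (c * ‖x‖ ^ (-(a / 2) - 1) * x i) * euler (euler f) x := by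
    intro i
    have h0 : euler (Dop a b c i f) x = ∑ j, x j * pd j (Dop a b c i f) x := rfl
    have hterm : ∀ j : Fin m, x j * pd j (Dop a b c i f) x
        = ((1 - a / 2) * ‖x‖ ^ ((1 - a / 2) - 2) * pd i f x
            + b * ((-(a / 2) - 1) * ‖x‖ ^ ((-(a / 2) - 1) - 2)) * x i * f x
            + c * ((-(a / 2) - 1) * ‖x‖ ^ ((-(a / 2) - 1) - 2)) * x i * euler f x)
            * (x j * x j)
          + ‖x‖ ^ (1 - a / 2) * (x j * pd j (pd i f) x)
          + (if j = i then (b * ‖x‖ ^ (-(a / 2) - 1) * f x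
              + c * ‖x‖ ^ (-(a / 2) - 1) * euler f x) * x j else 0)
          + (b * ‖x‖ ^ (-(a / 2) - 1) * x i) * (x j * pd j f x)
          + (c * ‖x‖ ^ (-(a / 2) - 1) * x i) * (x j * pd j (euler f) x) := by
      intro j
      rw [pdDop i j]
      rcases eq_or_ne j i with h | h <;> simp [h] <;> ring
    rw [h0, Finset.sum_congr rfl (fun j _ => hterm j),
      Finset.sum_add_distrib, Finset.sum_add_distrib, Finset.sum_add_distrib,
      Finset.sum_add_distrib, ← Finset.mul_sum, ← Finset.mul_sum, ← Finset.mul_sum,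
      ← Finset.mul_sum]
    congr 1
    congr 1
    congr 1
    · congr 1
      simp
  have hMain : ∀ i : Fin m, Dop a b c i (Dop a b c i f) x
      = (b * (-(a / 2) - 1) * (‖x‖ ^ (1 - a / 2) * ‖x‖ ^ ((-(a / 2) - 1) - 2)) * f x
          + c * (-(a / 2) - 1) * (‖x‖ ^ (1 - a / 2) * ‖x‖ ^ ((-(a / 2) - 1) - 2)) * euler f x
          + b * b * (‖x‖ ^ (-(a / 2) - 1) * ‖x‖ ^ (-(a / 2) - 1)) * f x
          + b * c * (‖x‖ ^ (-(a / 2) - 1) * ‖x‖ ^ (-(a / 2) - 1)) * euler f x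
          + c * b * (-(a / 2) - 1) * (‖x‖ ^ (-(a / 2) - 1) * ‖x‖ ^ ((-(a / 2) - 1) - 2)
              * (‖x‖ * ‖x‖)) * f x
          + c * b * (‖x‖ ^ (-(a / 2) - 1) * ‖x‖ ^ (-(a / 2) - 1)) * f x
          + c * b * (‖x‖ ^ (-(a / 2) - 1) * ‖x‖ ^ (-(a / 2) - 1)) * euler f x
          + c * c * (-(a / 2) - 1) * (‖x‖ ^ (-(a / 2) - 1) * ‖x‖ ^ ((-(a / 2) - 1) - 2)
              * (‖x‖ * ‖x‖)) * euler f x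
          + c * c * (‖x‖ ^ (-(a / 2) - 1) * ‖x‖ ^ (-(a / 2) - 1)) * euler f x
          + c * c * (‖x‖ ^ (-(a / 2) - 1) * ‖x‖ ^ (-(a / 2) - 1)) * euler (euler f) x)
          * (x i * x i)
        + ((1 - a / 2) * (‖x‖ ^ (1 - a / 2) * ‖x‖ ^ ((1 - a / 2) - 2))
            + 2 * b * (‖x‖ ^ (1 - a / 2) * ‖x‖ ^ (-(a / 2) - 1))
            + c * (1 - a / 2) * (‖x‖ ^ (-(a / 2) - 1) * ‖x‖ ^ ((1 - a / 2) - 2) * (‖x‖ * ‖x‖)))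
          * (x i * pd i f x)
        + (‖x‖ ^ (1 - a / 2) * ‖x‖ ^ (1 - a / 2)) * pd i (pd i f) x
        + (c * (‖x‖ ^ (1 - a / 2) * ‖x‖ ^ (-(a / 2) - 1))) * (x i * euler (pd i f) x)
        + (c * (‖x‖ ^ (1 - a / 2) * ‖x‖ ^ (-(a / 2) - 1))) * (x i * pd i (euler f) x)
        + (b * f x + c * euler f x) * (‖x‖ ^ (1 - a / 2) * ‖x‖ ^ (-(a / 2) - 1)) := by
    intro i
    have hv0 : Dop a b c i (Dop a b c i f) x
        = ‖x‖ ^ (1 - a / 2) * pd i (Dop a b c i f) x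
          + b * ‖x‖ ^ (-(a / 2) - 1) * x i * Dop a b c i f x
          + c * ‖x‖ ^ (-(a / 2) - 1) * x i * euler (Dop a b c i f) x := rfl
    have hval : Dop a b c i f x
        = ‖x‖ ^ (1 - a / 2) * pd i f x + b * ‖x‖ ^ (-(a / 2) - 1) * x i * f x
          + c * ‖x‖ ^ (-(a / 2) - 1) * x i * euler f x := rfl
    rw [hv0, pdDop i i, hEulerDop i, hval, hN]
    simp only [eq_self_iff_true, if_true]
    ring
  rw [Finset.sum_congr rfl (fun i _ => hMain i),
    Finset.sum_add_distrib, Finset.sum_add_distrib, Finset.sum_add_distrib,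
    Finset.sum_add_distrib, Finset.sum_add_distrib,
    ← Finset.mul_sum, ← Finset.mul_sum, ← Finset.mul_sum, ← Finset.mul_sum, ← Finset.mul_sum,
    Finset.sum_const, Finset.card_univ, Fintype.card_fin, nsmul_eq_mul, hN, hSR,
    show (∑ i, x i * pd i f x) = euler f x from rfl,
    show (∑ i, x i * pd i (euler f) x) = euler (euler f) x from rfl]
  have hrne : ‖x‖ ≠ 0 := ne_of_gt hr0
  have hu : ‖x‖ ^ (1 - a / 2) = ‖x‖ * ‖x‖ ^ (-(a / 2)) := by
    rw [show (1 - a / 2) = -(a / 2) + 1 by ring, Real.rpow_add hr0, Real.rpow_one]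
    ring
  have hv : ‖x‖ ^ (-(a / 2) - 1) = ‖x‖ ^ (-(a / 2)) / ‖x‖ := by
    rw [show -(a / 2) - 1 = -(a / 2) + (-1) by ring, Real.rpow_add hr0, Real.rpow_neg_one]
    ring
  have hV : ‖x‖ ^ ((1 - a / 2) - 2) = ‖x‖ ^ (-(a / 2)) / ‖x‖ := by
    rw [show (1 - a / 2) - 2 = -(a / 2) + (-1) by ring, Real.rpow_add hr0, Real.rpow_neg_one]
    ring
  have hw : ‖x‖ ^ ((-(a / 2) - 1) - 2) = ‖x‖ ^ (-(a / 2)) / (‖x‖ * (‖x‖ * ‖x‖)) := by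
    have h3 : ‖x‖ ^ ((-(a / 2) - 1) - 2) * (‖x‖ * (‖x‖ * ‖x‖)) = ‖x‖ ^ (-(a / 2)) := by
      rw [show ‖x‖ * (‖x‖ * ‖x‖) = ‖x‖ ^ ((3 : ℕ) : ℝ) by rw [Real.rpow_natCast]; ring,
        ← Real.rpow_add hr0]
      congr 1
      push_cast
      ring
    rw [eq_div_iff (by positivity)]
    exact h3
  have hma : ‖x‖ ^ (-a) = ‖x‖ ^ (-(a / 2)) * ‖x‖ ^ (-(a / 2)) := by
    rw [← Real.rpow_add hr0]
    congr 1
    ring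
  have h2a : ‖x‖ ^ (2 - a) = (‖x‖ * ‖x‖ ^ (-(a / 2))) * (‖x‖ * ‖x‖ ^ (-(a / 2))) := by
    rw [show (2 - a) = (1 - a / 2) + (1 - a / 2) by ring, Real.rpow_add hr0, hu]
  rw [h2a, hma, hu, hV, hv, hw]
  field_simp
  ring
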